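/- arXiv:2402.04984 — 7 statements merged into one kernel-verified Lean document; each statement's English description precedes it below -/
import Mathlib

section
/- Let h ∈ ω^ω and b a sequence of nonempty finite sets with h(n) ≤ |b(n)| for all n. Then limsup_{n→∞} h(n)/|b(n)| < 1 if and only if for every infinite set A ⊆ ω, ∏_{n∈A} h(n)/|b(n)| = 0. -/
/-!
Write `r n = h n / |b n| ∈ [0, 1]`. If `limsup r < 1`, then `r n ≤ c < 1` from some `N₀` on, so a
partial product over an infinite `A` is at most `c ^ k`, with `k` the number of elements of `A`
in `[N₀, N)`, which tends to infinity. If `limsup r ≥ 1`, pick `n₀ < n₁ < ⋯` with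
`r nₖ > 1 - 2⁻ᵏ / 4`; by the Weierstrass product inequality `∏ (1 - εₖ) ≥ 1 - ∑ εₖ`, the partial
products over `A = {nₖ}` stay above `1 / 2`.
-/

open Filter Finset Topology
open scoped Classical

theorem Finset.one_sub_sum_le_prod_one_sub {ι : Type*} {s : Finset ι} {f : ι → ℝ}
    (hf0 : ∀ i ∈ s, 0 ≤ f i) (hf1 : ∀ i ∈ s, f i ≤ 1) :
    1 - ∑ i ∈ s, f i ≤ ∏ i ∈ s, (1 - f i) := by
  induction s using Finset.induction with
  | empty => simp
  | insert a s ha ih =>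
    rw [sum_insert ha, prod_insert ha]
    have hfa0 := hf0 a (mem_insert_self a s)
    have hfa1 := hf1 a (mem_insert_self a s)
    have ih := ih (fun i hi => hf0 i (mem_insert_of_mem hi))
      fun i hi => hf1 i (mem_insert_of_mem hi)
    have hsum : 0 ≤ ∑ i ∈ s, f i := sum_nonneg fun i hi => hf0 i (mem_insert_of_mem hi)
    nlinarith

theorem Nat.tendsto_count_atTop {p : ℕ → Prop} [DecidablePred p] (hp : (Set.ofPred p).Infinite) :
    Tendsto (Nat.count p) atTop atTop :=
  Nat.count_monotone p |>.tendsto_atTop_atTop fun k =>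
    ⟨Nat.nth p k, (Nat.count_nth_of_infinite hp k).ge⟩

theorem sum_range_geometric_two_div_four_le (N : ℕ) :
    ∑ k ∈ range N, (1 / 2 : ℝ) ^ k / 4 ≤ 1 / 2 := by
  rw [← sum_div]
  linarith [sum_geometric_two_le N]

section Products

variable {r : ℕ → ℝ}

theorem prod_range_mulIndicator_le_pow_count {A : Set ℕ} {c : ℝ} {N₀ : ℕ} (hr0 : ∀ n, 0 ≤ r n)
    (hr1 : ∀ n, r n ≤ 1) (hc : ∀ n ≥ N₀, r n ≤ c) (N : ℕ) :
    ∏ n ∈ range N, A.mulIndicator r n ≤ c ^ Nat.count (· ∈ A \ Set.Iio N₀) N := by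
  calc ∏ n ∈ range N, A.mulIndicator r n
      ≤ ∏ n ∈ range N, (A \ Set.Iio N₀).mulIndicator (fun _ => c) n := by
        refine prod_le_prod (fun n _ => ?_) fun n _ => ?_
        · by_cases hn : n ∈ A <;> simp [hn, hr0]
        · by_cases hn : n ∈ A <;> by_cases hN : N₀ ≤ n <;> simp [hn, hN, hr1, hc]
    _ = c ^ Nat.count (· ∈ A \ Set.Iio N₀) N := by
        rw [Nat.count_eq_card_filter_range, ← prod_const]
        exact prod_mulIndicator_eq_prod_filter (range N) (fun _ _ => c) (fun _ => A \ Set.Iio N₀) id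

theorem prod_range_le_prod_range_mulIndicator_range (hr0 : ∀ n, 0 ≤ r n) (hr1 : ∀ n, r n ≤ 1)
    {φ : ℕ → ℕ} (hφ : StrictMono φ) (N : ℕ) :
    ∏ k ∈ range N, r (φ k) ≤ ∏ n ∈ range N, (Set.range φ).mulIndicator r n := by
  have hinj : Set.InjOn φ (φ ⁻¹' ↑(range N)) := hφ.injective.injOn
  rw [← prod_preimage φ (range N) hinj _ fun n _ hn => Set.mulIndicator_of_notMem hn r]
  simp only [Set.mulIndicator_of_mem (Set.mem_range_self _)]
  refine prod_le_prod_of_subset_of_le_one (fun k hk => ?_) (fun k _ => hr0 _) fun k _ _ => hr1 _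
  simp only [mem_preimage, mem_range] at hk ⊢
  exact hφ.le_apply.trans_lt hk

theorem tendsto_prod_range_mulIndicator_zero_of_limsup_lt_one (hr0 : ∀ n, 0 ≤ r n)
    (hr1 : ∀ n, r n ≤ 1) (hlim : limsup r atTop < 1) {A : Set ℕ} (hA : A.Infinite) :
    Tendsto (fun N => ∏ n ∈ range N, A.mulIndicator r n) atTop (𝓝 0) := by
  obtain ⟨c, hLc, hc1⟩ := exists_between (max_lt hlim one_pos)
  obtain ⟨N₀, hN₀⟩ := eventually_atTop.mp <|
    eventually_lt_of_limsup_lt (le_max_left _ _ |>.trans_lt hLc) (isBoundedUnder_of ⟨1, hr1⟩)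
  have hcount : Tendsto (Nat.count (· ∈ A \ Set.Iio N₀)) atTop atTop :=
    Nat.tendsto_count_atTop (hA.sdiff (Set.finite_Iio N₀))
  refine squeeze_zero (fun N => prod_nonneg fun n _ => ?_)
    (prod_range_mulIndicator_le_pow_count hr0 hr1 (fun n hn => (hN₀ n hn).le))
    ((tendsto_pow_atTop_nhds_zero_of_lt_one ((le_max_right _ _).trans hLc.le) hc1).comp hcount)
  by_cases hn : n ∈ A <;> simp [hn, hr0]

theorem exists_infinite_not_tendsto_prod_range_mulIndicator_zero (hr0 : ∀ n, 0 ≤ r n)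
    (hr1 : ∀ n, r n ≤ 1) (hlim : 1 ≤ limsup r atTop) :
    ∃ A : Set ℕ, A.Infinite ∧
      ¬Tendsto (fun N => ∏ n ∈ range N, A.mulIndicator r n) atTop (𝓝 0) := by
  set ε : ℕ → ℝ := fun k => (1 / 2) ^ k / 4
  have hε0 : ∀ k, 0 < ε k := fun k => by positivity
  have hε1 : ∀ k, ε k ≤ 1 := fun k => by
    have : (1 / 2 : ℝ) ^ k ≤ 1 := pow_le_one₀ (by norm_num) (by norm_num)
    simp only [ε]
    linarith
  have hfreq (k : ℕ) : ∃ᶠ n in atTop, 1 - ε k < r n :=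
    frequently_lt_of_lt_limsup (isBoundedUnder_of ⟨0, hr0⟩).isCoboundedUnder_le
      (by linarith [hε0 k])
  obtain ⟨φ, hφ, hφr⟩ := extraction_forall_of_frequently hfreq
  refine ⟨Set.range φ, Set.infinite_range_of_injective hφ.injective, fun htends => ?_⟩
  have hbound (N : ℕ) : 1 / 2 ≤ ∏ n ∈ range N, (Set.range φ).mulIndicator r n :=
    calc (1 / 2 : ℝ)
        ≤ 1 - ∑ k ∈ range N, ε k := by linarith [sum_range_geometric_two_div_four_le N]
      _ ≤ ∏ k ∈ range N, (1 - ε k) :=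
        one_sub_sum_le_prod_one_sub (fun k _ => (hε0 k).le) fun k _ => hε1 k
      _ ≤ ∏ k ∈ range N, r (φ k) :=
        prod_le_prod (fun k _ => sub_nonneg.mpr (hε1 k)) fun k _ => (hφr k).le
      _ ≤ _ := prod_range_le_prod_range_mulIndicator_range hr0 hr1 hφ N
  linarith [ge_of_tendsto' htends hbound]

end Products

theorem stmt_5_general (h : ℕ → ℕ) (b : ℕ → Finset ℕ)
    (hle : ∀ n, h n ≤ (b n).card) :
    limsup (fun n : ℕ => (h n : ℝ) / (b n).card) atTop < 1 ↔
      ∀ A : Set ℕ, A.Infinite →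
        Tendsto
          (fun N : ℕ => ∏ n ∈ Finset.range N,
            (if n ∈ A then (h n : ℝ) / (b n).card else 1))
          atTop (nhds 0) := by
  set r : ℕ → ℝ := fun n => (h n : ℝ) / (b n).card
  have hr0 (n : ℕ) : 0 ≤ r n := by positivity
  have hr1 (n : ℕ) : r n ≤ 1 := div_le_one_of_le₀ (by exact_mod_cast hle n) (Nat.cast_nonneg _)
  change limsup r atTop < 1 ↔ ∀ A : Set ℕ, A.Infinite →
    Tendsto (fun N => ∏ n ∈ range N, A.mulIndicator r n) atTop (𝓝 0)
  constructor
  · exact fun hlim A hA => tendsto_prod_range_mulIndicator_zero_of_limsup_lt_one hr0 hr1 hlim hA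
  · contrapose!
    exact exists_infinite_not_tendsto_prod_range_mulIndicator_zero hr0 hr1

/-- For h ∈ ω^ω and a sequence b of nonempty finite sets with h n ≤ |b n|:
limsup h n/|b n| < 1 iff for every infinite A ⊆ ω the product
∏_{n∈A} h n/|b n| (limit of partial products) is 0. -/
theorem stmt_5 (h : ℕ → ℕ) (b : ℕ → Finset ℕ)
    (hne : ∀ n, (b n).Nonempty) (hle : ∀ n, h n ≤ (b n).card) :
    limsup (fun n : ℕ => (h n : ℝ) / (b n).card) atTop < 1 ↔
      ∀ A : Set ℕ, A.Infinite →
        Tendsto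
          (fun N : ℕ => ∏ n ∈ Finset.range N,
            (if n ∈ A then (h n : ℝ) / (b n).card else 1))
          atTop (nhds 0) :=
  stmt_5_general h b hle
end

section
/- Every F_σ measure-zero subset C of 2^ω is contained in a set of the form H_{b̃,φ} = {x ∈ 2^ω : ∀^∞ n, x↾[b̃(n), b̃(n+1)) ∈ φ(n)}, where b̃ ∈ ω^ω is increasing with b̃(0)=0 and φ(n) ⊆ 2^{[b̃(n),b̃(n+1))} satisfies |φ(n)|/2^{b̃(n+1)-b̃(n)} ≤ 2^{-n} for all n. -/
open MeasureTheory Filter Topology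

/-!
For a closed null set `G ⊆ 2^ω`, the clopen sets of points agreeing on `[0, c)` with some point
of `G` decrease to `G`, so their measures `|G↾[0,c)| / 2^c` tend to `0`; hence so does
`|G↾[a,c)| / 2^(c-a)` for each fixed `a`. Writing `C` as the increasing union of the closed null
sets `G n = F 0 ∪ ⋯ ∪ F n`, choose `b (n+1) > b n` so that `φ n := G n ↾ [b n, b (n+1))` has
relative size at most `2^(-n)`. A point of `F m` lies in `G n` for all `n ≥ m`.
-/

namespace CantorNull

section Restrictions

variable {ι β : Type*} [Finite β]

noncomputable def restrictions (G : Set (ι → β)) (S : Finset ι) : Finset (S → β) :=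
  (Set.toFinite (S.restrict '' G)).toFinset

@[simp]
lemma coe_restrictions (G : Set (ι → β)) (S : Finset ι) :
    (restrictions G S : Set (S → β)) = S.restrict '' G :=
  Set.Finite.coe_toFinset _

lemma restrict_mem_restrictions {G : Set (ι → β)} {x : ι → β} (hx : x ∈ G) (S : Finset ι) :
    S.restrict x ∈ restrictions G S := by
  rw [← Finset.mem_coe, coe_restrictions]
  exact Set.mem_image_of_mem _ hx

lemma card_restrictions_mono (G : Set (ι → β)) {S T : Finset ι} (hST : S ⊆ T) :
    (restrictions G S).card ≤ (restrictions G T).card := by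
  classical
  refine (Finset.card_le_card fun s hs => ?_).trans
    (Finset.card_image_le (s := restrictions G T) (f := Finset.restrict₂ (π := fun _ => β) hST))
  rw [← Finset.mem_coe, coe_restrictions] at hs
  obtain ⟨x, hx, rfl⟩ := hs
  exact Finset.mem_image_of_mem _ (restrict_mem_restrictions hx T)

end Restrictions

lemma iInter_restrict_preimage_image_range {β : Type*} [TopologicalSpace β] {G : Set (ℕ → β)}
    (hG : IsClosed G) :
    ⋂ b, (Finset.range b).restrict ⁻¹' ((Finset.range b).restrict '' G) = G := by
  refine subset_antisymm (fun x hx => ?_) fun x hx => Set.mem_iInter.2 fun b => ⟨x, hx, rfl⟩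
  choose y hyG hxy using Set.mem_iInter.1 hx
  have hy : Tendsto y atTop (𝓝 x) := by
    refine tendsto_pi_nhds.2 fun i => tendsto_const_nhds.congr' ?_
    filter_upwards [eventually_gt_atTop i] with b hb
    exact (congr_fun (hxy b) ⟨i, Finset.mem_range.2 hb⟩).symm
  exact hG.mem_of_tendsto hy (Eventually.of_forall hyG)

section Measure

variable {ι : Type*} (μ : Measure (ι → Bool))

lemma measure_restrict_preimage_singleton
    (hμ : ∀ (F : Finset ι) (f : ι → Bool), μ {x | ∀ i ∈ F, x i = f i} = 2⁻¹ ^ F.card)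
    (S : Finset ι) (s : S → Bool) : μ (S.restrict ⁻¹' {s}) = 2⁻¹ ^ S.card := by
  classical
  convert hμ S (fun i => if h : i ∈ S then s ⟨i, h⟩ else false) using 2
  ext x
  simp only [Set.mem_preimage, Set.mem_singleton_iff, funext_iff, Subtype.forall, Finset.restrict,
    Set.mem_ofPred_eq]
  exact forall₂_congr fun i hi => by rw [dif_pos hi]

lemma measure_restrict_preimage [Countable ι]
    (hμ : ∀ (F : Finset ι) (f : ι → Bool), μ {x | ∀ i ∈ F, x i = f i} = 2⁻¹ ^ F.card)
    (S : Finset ι) (T : Finset (S → Bool)) :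
    μ (S.restrict ⁻¹' T) = T.card * 2⁻¹ ^ S.card := by
  rw [← Measure.map_apply (Finset.measurable_restrict S) T.measurableSet, ← sum_measure_singleton]
  simp [Measure.map_apply (Finset.measurable_restrict S) (measurableSet_singleton _),
    measure_restrict_preimage_singleton μ hμ]

end Measure

section ClosedNull

variable (μ : Measure (ℕ → Bool)) [IsFiniteMeasure μ] {G : Set (ℕ → Bool)}

lemma tendsto_card_restrictions_range_div
    (hμ : ∀ (F : Finset ℕ) (f : ℕ → Bool), μ {x | ∀ i ∈ F, x i = f i} = 2⁻¹ ^ F.card)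
    (hG : IsClosed G) (hG0 : μ G = 0) :
    Tendsto (fun c => ((restrictions G (Finset.range c)).card : ℝ) / 2 ^ c) atTop (𝓝 0) := by
  have hanti : Antitone fun c => (Finset.range c).restrict ⁻¹' ((Finset.range c).restrict '' G) :=
    fun c d hcd x ⟨y, hyG, hxy⟩ => ⟨y, hyG, funext fun i =>
      congr_fun hxy ⟨i, Finset.range_subset_range.2 hcd i.2⟩⟩
  have hmeas (c : ℕ) :
      NullMeasurableSet ((Finset.range c).restrict ⁻¹' ((Finset.range c).restrict '' G)) μ := by
    rw [← coe_restrictions]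
    exact ((Finset.measurable_restrict _) (Finset.measurableSet _)).nullMeasurableSet
  have hD := tendsto_measure_iInter_atTop hmeas hanti ⟨0, measure_ne_top μ _⟩
  rw [iInter_restrict_preimage_image_range hG, hG0] at hD
  convert (ENNReal.tendsto_toReal ENNReal.zero_ne_top).comp hD using 1
  · ext c
    simp [← coe_restrictions, measure_restrict_preimage μ hμ, div_eq_mul_inv]
  · rw [ENNReal.toReal_zero]

lemma tendsto_card_restrictions_Ico_div
    (hμ : ∀ (F : Finset ℕ) (f : ℕ → Bool), μ {x | ∀ i ∈ F, x i = f i} = 2⁻¹ ^ F.card)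
    (hG : IsClosed G) (hG0 : μ G = 0) (a : ℕ) :
    Tendsto (fun c => ((restrictions G (Finset.Ico a c)).card : ℝ) / 2 ^ (c - a)) atTop (𝓝 0) := by
  refine squeeze_zero' (Eventually.of_forall fun c => by positivity) ?_
    (by simpa using (tendsto_card_restrictions_range_div μ hμ hG hG0).const_mul ((2 : ℝ) ^ a))
  filter_upwards [eventually_ge_atTop a] with c hac
  calc ((restrictions G (Finset.Ico a c)).card : ℝ) / 2 ^ (c - a)
      ≤ (restrictions G (Finset.range c)).card / 2 ^ (c - a) := by
        gcongr
        exact card_restrictions_mono G fun i hi => by simp at hi ⊢; omega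
    _ = 2 ^ a * ((restrictions G (Finset.range c)).card / 2 ^ c) := by
        rw [← Nat.sub_add_cancel hac, pow_add]; field_simp; simp

end ClosedNull

lemma exists_strictMono_forall_eventually {P : ℕ → ℕ → ℕ → Prop}
    (h : ∀ n a, ∀ᶠ c in atTop, P n a c) :
    ∃ b : ℕ → ℕ, StrictMono b ∧ b 0 = 0 ∧ ∀ n, P n (b n) (b (n + 1)) := by
  choose next hnext using fun n a => ((h n a).and (eventually_gt_atTop a)).exists
  exact ⟨fun n => Nat.rec 0 next n, strictMono_nat_of_lt_succ fun n => (hnext n _).2, rfl,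
    fun n => (hnext n _).1⟩

end CantorNull

open CantorNull in
/-- Every F_σ measure-zero subset C of 2^ω is contained in some
H_{b,φ} = {x : ∀^∞ n, x↾[b n, b (n+1)) ∈ φ n} where b is increasing with b 0 = 0
and |φ n|/2^{b(n+1)-b(n)} ≤ 2^{-n}. -/
theorem stmt_7 (μ : Measure (ℕ → Bool)) [IsProbabilityMeasure μ]
    (hμ : ∀ (F : Finset ℕ) (f : ℕ → Bool),
      μ {x | ∀ i ∈ F, x i = f i} = (2⁻¹ : ENNReal) ^ F.card)
    (C : Set (ℕ → Bool)) (F : ℕ → Set (ℕ → Bool))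
    (hFcl : ∀ n, IsClosed (F n)) (hF0 : ∀ n, μ (F n) = 0) (hC : C = ⋃ n, F n) :
    ∃ b : ℕ → ℕ, StrictMono b ∧ b 0 = 0 ∧
      ∃ φ : ∀ n : ℕ, Finset ({i // i ∈ Finset.Ico (b n) (b (n + 1))} → Bool),
        (∀ n, ((φ n).card : ℝ) / 2 ^ (b (n + 1) - b n) ≤ (2 : ℝ)⁻¹ ^ n) ∧
        C ⊆ {x : ℕ → Bool |
          ∀ᶠ n in atTop, (fun i : {i // i ∈ Finset.Ico (b n) (b (n + 1))} => x i.1) ∈ φ n} := by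
  set G : ℕ → Set (ℕ → Bool) := fun n => ⋃ i ≤ n, F i
  have hGcl : ∀ n, IsClosed (G n) := fun n => (Set.finite_Iic n).isClosed_biUnion fun i _ => hFcl i
  have hG0 : ∀ n, μ (G n) = 0 := fun n =>
    (measure_biUnion_null_iff (Set.to_countable _)).2 fun i _ => hF0 i
  obtain ⟨b, hb, hb0, hbG⟩ := exists_strictMono_forall_eventually fun n a =>
    (tendsto_card_restrictions_Ico_div μ hμ (hGcl n) (hG0 n) a).eventually
      (ge_mem_nhds (pow_pos (inv_pos.2 two_pos) n))
  refine ⟨b, hb, hb0, fun n => restrictions (G n) _, hbG, ?_⟩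
  rw [hC]
  intro x hx
  obtain ⟨m, hx⟩ := Set.mem_iUnion.1 hx
  filter_upwards [eventually_ge_atTop m] with n hmn
  exact restrict_mem_restrictions (Set.mem_biUnion (Set.mem_Iic.2 hmn) hx) _
end

section
/- Let ℙ be a preorder and Q ⊆ ℙ. Q is Fr-linked (for every sequence ⟨p_n : n<ω⟩ in Q there is q ∈ ℙ forcing that {n : p_n ∈ Ġ} is infinite) if and only if for every ℙ-name ṅ of a natural number there is m < ω such that no p ∈ Q forces m < ṅ. -/
variable {P : Type*} [Preorder P]

/-- Compatibility of conditions. -/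
def Compat (p q : P) : Prop := ∃ r, r ≤ p ∧ r ≤ q

/-- A is an antichain: distinct elements are incompatible. -/
def IsAntichain' (A : Set P) : Prop := ∀ p ∈ A, ∀ q ∈ A, p ≠ q → ¬ Compat p q

/-- A is a maximal antichain. -/
def MaxAntichain (A : Set P) : Prop :=
  IsAntichain' A ∧ ∀ p : P, ∃ a ∈ A, Compat p a

/-- Q ⊆ ℙ is Fr-linked: for every sequence ⟨p_n⟩ in Q there is q forcing that
{n : p_n ∈ Ġ} is infinite, i.e. for every r ≤ q and every N there are n ≥ N and a
common extension of r and p_n. -/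
def FrLinked (Q : Set P) : Prop :=
  ∀ p : ℕ → P, (∀ n, p n ∈ Q) →
    ∃ q : P, ∀ r, r ≤ q → ∀ N : ℕ, ∃ n ≥ N, ∃ s, s ≤ r ∧ s ≤ p n

/-- A ℙ-name ṅ of a natural number is given by a maximal antichain A with values
f : A → ℕ; p ⊩ m < ṅ iff densely below p there are conditions below some a ∈ A
with m < f a. -/
def ForcesLtName (p : P) (m : ℕ) (A : Set P) (f : P → ℕ) : Prop :=
  ∀ r, r ≤ p → ∃ s, s ≤ r ∧ ∃ a ∈ A, s ≤ a ∧ m < f a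

/-- Q is Fr-linked iff for every ℙ-name ṅ of a natural number (coded by a maximal
antichain with attached values) there is m < ω such that no p ∈ Q forces m < ṅ. -/
theorem stmt_10 (Q : Set P) :
    FrLinked Q ↔
      ∀ (A : Set P) (f : P → ℕ), MaxAntichain A →
        ∃ m : ℕ, ∀ p ∈ Q, ¬ ForcesLtName p m A f := by
  classical
  constructor
  · intro hF A f hA
    by_contra hcon
    push_neg at hcon
    choose p hpQ hpF using hcon
    obtain ⟨q, hq⟩ := hF p hpQ
    obtain ⟨a, haA, r, hrq, hra⟩ := hA.2 q
    obtain ⟨n, hn, s, hsr, hsp⟩ := hq r hrq (f a)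
    obtain ⟨s', hs's, a', ha'A, hs'a', hlt⟩ := hpF n s hsp
    rcases eq_or_ne a a' with rfl | hne
    · exact absurd hlt (not_lt.2 hn)
    · exact hA.1 a haA a' ha'A hne ⟨s', (hs's.trans hsr).trans hra, hs'a'⟩
  · intro h p hpQ
    by_contra hq
    push_neg at hq
    -- hq : ∀ q, ∃ r ≤ q, ∃ N, ∀ n ≥ N, ∀ s, s ≤ r → ¬ s ≤ p n
    set D : Set P := {r | ∃ N : ℕ, ∀ n, N ≤ n → ∀ s, s ≤ r → ¬ s ≤ p n} with hD
    have hdense : ∀ q : P, ∃ r, r ≤ q ∧ r ∈ D := by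
      intro q
      obtain ⟨r, hrq, N, hN⟩ := hq q
      exact ⟨r, hrq, N, fun n hn s hsr hsn => hN n hn s hsr hsn⟩
    -- maximal antichain inside D via Zorn
    obtain ⟨A, hAmax⟩ := zorn_subset {A : Set P | A ⊆ D ∧ IsAntichain' A} (by
      intro c hc hchain
      refine ⟨⋃₀ c, ⟨?_, ?_⟩, fun s hs => Set.subset_sUnion_of_mem hs⟩
      · exact Set.sUnion_subset fun t ht => (hc ht).1
      · intro x hx y hy hxy
        obtain ⟨tx, htx, hxtx⟩ := hx
        obtain ⟨ty, hty, hyty⟩ := hy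
        rcases hchain.total htx hty with hsub | hsub
        · exact (hc hty).2 x (hsub hxtx) y hyty hxy
        · exact (hc htx).2 x hxtx y (hsub hyty) hxy)
    have hAD : A ⊆ D := hAmax.prop.1
    have hAac : IsAntichain' A := hAmax.prop.2
    have hAmaxac : MaxAntichain A := by
      refine ⟨hAac, fun q => ?_⟩
      obtain ⟨r, hrq, hrD⟩ := hdense q
      by_contra hno
      push_neg at hno
      have hno' : ∀ a ∈ A, ¬ Compat r a :=
        fun a ha ⟨s, h1, h2⟩ => hno a ha ⟨s, h1.trans hrq, h2⟩
      have hrA : r ∉ A := fun hrA => hno' r hrA ⟨r, le_refl r, le_refl r⟩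
      have hins : insert r A ∈ {A : Set P | A ⊆ D ∧ IsAntichain' A} := by
        constructor
        · exact Set.insert_subset hrD hAD
        · intro x hx y hy hxy
          rcases hx with rfl | hx <;> rcases hy with rfl | hy
          · exact absurd rfl hxy
          · intro ⟨s, hs1, hs2⟩; exact hno' y hy ⟨s, hs1, hs2⟩
          · intro ⟨s, hs1, hs2⟩; exact hno' x hx ⟨s, hs2, hs1⟩
          · exact hAac x hx y hy hxy
      have := hAmax.eq_of_subset hins (Set.subset_insert r A)
      exact hrA (this ▸ Set.mem_insert r A)
    set f : P → ℕ := fun r => if h : r ∈ D then h.choose else 0 with hf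
    have hfspec : ∀ r (hr : r ∈ D), ∀ n, f r ≤ n → ∀ s, s ≤ r → ¬ s ≤ p n := by
      intro r hr
      simp only [hf, dif_pos hr]
      exact hr.choose_spec
    obtain ⟨m, hm⟩ := h A f hAmaxac
    refine hm (p m) (hpQ m) ?_
    intro r hrpm
    obtain ⟨a, haA, s, hsr, hsa⟩ := hAmaxac.2 r
    refine ⟨s, hsr, a, haA, hsa, ?_⟩
    by_contra hle
    push_neg at hle
    exact hfspec a (hAD haA) m hle s hsa (hsr.trans hrpm)
end

section
/- Let ℙ be a preorder and Q ⊆ ℙ an Fr-linked set. For every ℙ-name ẏ of a function in ω^ω there exists y' ∈ ω^ω (in the ground model) such that for every x ∈ ω^ω, if x ≰* y' then for every n ∈ ω and every p ∈ Q, p does not force ∀m ≥ n: x(m) ≤ ẏ(m). -/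
variable {P : Type*} [Preorder P]

/-- p ⊩ k ≤ ṅ for a name coded by a maximal antichain A with values f. -/
def ForcesLeName (p : P) (k : ℕ) (A : Set P) (f : P → ℕ) : Prop :=
  ∀ r, r ≤ p → ∃ s, s ≤ r ∧ ∃ a ∈ A, s ≤ a ∧ k ≤ f a

/-- If Q ⊆ ℙ is Fr-linked (via the characterization: every name ṅ of a natural is
bounded on Q), then for every ℙ-name ẏ of a member of ω^ω (coded coordinatewise by
maximal antichains A m with values f m) there is y' ∈ ω^ω in the ground model such
that whenever x ≰* y', no p ∈ Q forces ∀ m ≥ n, x(m) ≤ ẏ(m), for any n. -/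
theorem stmt_11 (Q : Set P)
    (hQ : ∀ (A : Set P) (f : P → ℕ), MaxAntichain A →
      ∃ m : ℕ, ∀ p ∈ Q, ¬ ForcesLtName p m A f)
    (A : ℕ → Set P) (f : ℕ → P → ℕ) (hA : ∀ m, MaxAntichain (A m)) :
    ∃ y' : ℕ → ℕ, ∀ x : ℕ → ℕ,
      ¬ (∀ᶠ m in Filter.atTop, x m ≤ y' m) →
      ∀ n : ℕ, ∀ p ∈ Q, ¬ (∀ m, n ≤ m → ForcesLeName p (x m) (A m) (f m)) := by
  choose y' hy' using fun m => hQ (A m) (f m) (hA m)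
  refine ⟨y', fun x hx n p hp hforce => ?_⟩
  rw [Filter.not_eventually] at hx
  obtain ⟨m, hnm, hxm⟩ := (Filter.frequently_atTop.mp hx) n
  push_neg at hxm
  exact hy' m p hp fun r hr => by
    obtain ⟨s, hs, a, ha, hsa, hle⟩ := hforce m hnm r hr
    exact ⟨s, hs, a, ha, hsa, lt_of_lt_of_le hxm hle⟩
end

section
/- Let ℙ be a ccc preorder and Q ⊆ ℙ. Then Q is Fr-linked if and only if Q is leaf-linked, i.e., for every (countable) maximal antichain {p_n : n ∈ ω} ⊆ ℙ there is n ∈ ω such that every p ∈ Q is compatible with some p_j for j < n. -/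
variable {P : Type*} [Preorder P]

/-- Q ⊆ ℙ is leaf-linked: for every countable maximal antichain {p_n : n ∈ ω}
there is n such that every q ∈ Q is compatible with some p_j, j < n. -/
def LeafLinked (Q : Set P) : Prop :=
  ∀ p : ℕ → P, MaxAntichain (Set.range p) →
    ∃ n : ℕ, ∀ q ∈ Q, ∃ j < n, Compat q (p j)

/-- ℙ is ccc: every antichain is countable. -/
def Ccc (P : Type*) [Preorder P] : Prop :=
  ∀ A : Set P, IsAntichain' A → A.Countable


lemma compat_refl' (p : P) : Compat p p := ⟨p, le_refl p, le_refl p⟩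

lemma compat_symm' {p q : P} (h : Compat p q) : Compat q p :=
  let ⟨r, h1, h2⟩ := h; ⟨r, h2, h1⟩

lemma exists_max_antichain' (D : Set P) :
    ∃ A ⊆ D, IsAntichain' A ∧ ∀ r ∈ D, ∃ a ∈ A, Compat r a := by
  obtain ⟨A, hA, hmax⟩ := zorn_subset {A : Set P | A ⊆ D ∧ IsAntichain' A} (by
    intro c hc hchain
    refine ⟨⋃₀ c, ⟨?_, ?_⟩, fun s hs => Set.subset_sUnion_of_mem hs⟩
    · intro x hx
      obtain ⟨s, hs, hxs⟩ := hx
      exact (hc hs).1 hxs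
    · intro x hx y hy hxy
      obtain ⟨s, hs, hxs⟩ := hx
      obtain ⟨t, ht, hyt⟩ := hy
      rcases hchain.total hs ht with h | h
      · exact (hc ht).2 x (h hxs) y hyt hxy
      · exact (hc hs).2 x hxs y (h hyt) hxy)
  refine ⟨A, hA.1, hA.2, fun r hr => ?_⟩
  by_contra hcon
  push_neg at hcon
  have hrA : r ∉ A := fun h => hcon r h (compat_refl' r)
  have : insert r A ∈ {A : Set P | A ⊆ D ∧ IsAntichain' A} := by
    constructor
    · exact Set.insert_subset hr hA.1
    · intro x hx y hy hxy
      rcases hx with rfl | hx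
      · rcases hy with rfl | hy
        · exact absurd rfl hxy
        · exact fun h => hcon y hy h
      · rcases hy with rfl | hy
        · exact fun h => hcon x hx (compat_symm' h)
        · exact hA.2 x hx y hy hxy
  have := hmax this (Set.subset_insert r A)
  exact hrA (this (Set.mem_insert r A))

/-- For a ccc preorder ℙ, a set Q ⊆ ℙ is Fr-linked iff it is leaf-linked. -/
theorem stmt_12 (hccc : Ccc P) (Q : Set P) : FrLinked Q ↔ LeafLinked Q := by
  constructor
  · intro hFr p hmax
    by_contra h
    push_neg at h
    choose q hqQ hq using h
    obtain ⟨g, hg⟩ := hFr q hqQ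
    obtain ⟨a, ⟨m, rfl⟩, r, hrg, hra⟩ := hmax.2 g
    obtain ⟨n, hn, s, hsr, hs⟩ := hg r hrg (m + 1)
    exact hq n m (by omega) ⟨s, hs, hsr.trans hra⟩
  · intro hLL f hfQ
    by_contra h
    push_neg at h
    set D : Set P := {r | ∃ N, ∀ n ≥ N, ¬ Compat r (f n)} with hD
    have hdense : ∀ t : P, ∃ r ≤ t, r ∈ D := by
      intro t
      obtain ⟨r, hrt, N, hN⟩ := h t
      refine ⟨r, hrt, N, fun n hn hc => ?_⟩
      obtain ⟨s, hs1, hs2⟩ := hc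
      exact hN n hn s hs1 hs2
    obtain ⟨A, hAD, hAanti, hAmax⟩ := exists_max_antichain' D
    have hAc : A.Countable := hccc A hAanti
    have hAne : A.Nonempty := by
      obtain ⟨r, _, hrD⟩ := hdense (f 0)
      obtain ⟨a, ha, _⟩ := hAmax r hrD
      exact ⟨a, ha⟩
    obtain ⟨e, he⟩ := Set.Countable.exists_eq_range hAc hAne
    have hmaxA : MaxAntichain (Set.range e) := by
      constructor
      · rw [← he]; exact hAanti
      · intro t
        obtain ⟨r, hrt, hrD⟩ := hdense t
        obtain ⟨a, ha, s, hs1, hs2⟩ := hAmax r hrD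
        exact ⟨a, he ▸ ha, s, hs1.trans hrt, hs2⟩
    obtain ⟨n, hn⟩ := hLL e hmaxA
    have heD : ∀ j, e j ∈ D := fun j => hAD (he ▸ Set.mem_range_self j)
    choose N hN using heD
    set M := (Finset.range n).sup N with hM
    obtain ⟨j, hj, hcomp⟩ := hn (f M) (hfQ M)
    exact hN j M (Finset.le_sup (Finset.mem_range.mpr hj)) (compat_symm' hcomp)
end

section
/- Let ℙ be a ccc preorder with a height function h: ℙ → ω (q ≤ p implies h(q) ≥ h(p)) satisfying: (I) every decreasing ω-sequence of conditions of bounded height has a lower bound, and (II) for every m ∈ ω and every finite nonempty P ⊆ ℙ there is a finite R ⊆ ℙ with every member of R incompatible with every member of P, such that every p with h(p) ≤ m that is incompatible with all of P lies below some r ∈ R. Then each Q_m = {p : h(p) ≤ m} is leaf-linked, so ℙ is σ-leaf-linked. -/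
variable {P : Type*} [Preorder P]

/-- Auxiliary: a decreasing chain of nonempty finsets has nonempty intersection. -/
lemma aux_finset_chain {α : Type*} (D : ℕ → Finset α)
    (hmono : ∀ k, D (k + 1) ⊆ D k) (hne : ∀ k, (D k).Nonempty) :
    ∃ b, ∀ k, b ∈ D k := by
  have hmono' : ∀ {j k : ℕ}, j ≤ k → D k ⊆ D j := by
    intro j k hjk
    induction hjk with
    | refl => exact Finset.Subset.refl _
    | step _ ih => exact (hmono _).trans ih
  set S : Set ℕ := {c | ∃ k, (D k).card = c} with hS
  have hSne : S.Nonempty := ⟨(D 0).card, 0, rfl⟩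
  obtain ⟨k0, hk0⟩ : ∃ k, (D k).card = sInf S := Nat.sInf_mem hSne
  have hstab : ∀ k, k0 ≤ k → D k = D k0 := by
    intro k hk
    apply Finset.eq_of_subset_of_card_le (hmono' hk)
    rw [hk0]
    exact Nat.sInf_le ⟨k, rfl⟩
  obtain ⟨b, hb⟩ := hne k0
  refine ⟨b, fun k => ?_⟩
  have h1 : D (max k k0) = D k0 := hstab _ (le_max_right _ _)
  have h2 : D (max k k0) ⊆ D k := hmono' (le_max_left _ _)
  exact h2 (h1 ▸ hb)

/-- Iterated parent map: maps level `n + k` down to level `n`. -/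
def dropFun {α : Type*} (π : ℕ → α → α) : ℕ → ℕ → α → α
  | 0, _, a => a
  | k + 1, n, a => π n (dropFun π k (n + 1) a)

lemma dropFun_mem {α : Type*} (π : ℕ → α → α) (L : ℕ → Finset α)
    (hπ : ∀ n a, a ∈ L (n + 1) → π n a ∈ L n) :
    ∀ k n a, a ∈ L (n + k) → dropFun π k n a ∈ L n := by
  intro k
  induction k with
  | zero => intro n a ha; exact ha
  | succ k ih =>
    intro n a ha
    have ha' : a ∈ L ((n + 1) + k) := by
      have : n + (k + 1) = (n + 1) + k := by omega
      rwa [this] at ha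
    exact hπ n _ (ih (n + 1) a ha')

lemma dropFun_succ {α : Type*} (π : ℕ → α → α) :
    ∀ k n a, dropFun π (k + 1) n a = dropFun π k n (π (n + k) a) := by
  intro k
  induction k with
  | zero => intro n a; rfl
  | succ k ih =>
    intro n a
    show π n (dropFun π (k + 1) (n + 1) a) = π n (dropFun π k (n + 1) (π (n + (k + 1)) a))
    rw [ih (n + 1) a]
    have e : (n + 1) + k = n + (k + 1) := by omega
    rw [e]

/-- König's lemma for a sequence of nonempty finite levels with parent maps. -/
lemma koenig {α : Type*} (L : ℕ → Finset α) (hne : ∀ n, (L n).Nonempty)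
    (π : ℕ → α → α) (hπ : ∀ n a, a ∈ L (n + 1) → π n a ∈ L n) :
    ∃ f : ℕ → α, (∀ n, f n ∈ L n) ∧ (∀ n, f (n + 1) ∈ L (n + 1) ∧ π n (f (n + 1)) = f n) := by
  classical
  set D : ℕ → ℕ → Finset α := fun n k => (L (n + k)).image (dropFun π k n) with hD
  have hDne : ∀ n k, (D n k).Nonempty := fun n k => (hne (n + k)).image _
  have hDmono : ∀ n k, D n (k + 1) ⊆ D n k := by
    intro n k b hb
    simp only [hD, Finset.mem_image] at hb ⊢
    obtain ⟨a, ha, rfl⟩ := hb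
    refine ⟨π (n + k) a, hπ (n + k) a ha, (dropFun_succ π k n a).symm⟩
  have hD0 : ∀ n b, b ∈ D n 0 → b ∈ L n := by
    intro n b hb
    simp only [hD, Finset.mem_image] at hb
    obtain ⟨a, ha, rfl⟩ := hb
    exact ha
  have key : ∀ n (b : α), (∀ k, b ∈ D n k) →
      ∃ b', (∀ k, b' ∈ D (n + 1) k) ∧ π n b' = b := by
    intro n b hb
    set E : ℕ → Finset α := fun k => (D (n + 1) k).filter (fun x => π n x = b) with hE
    have hEne : ∀ k, (E k).Nonempty := by
      intro k
      have hbk := hb (k + 1)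
      simp only [hD, Finset.mem_image] at hbk
      obtain ⟨a, ha, hab⟩ := hbk
      have ha' : a ∈ L ((n + 1) + k) := by
        have : n + (k + 1) = (n + 1) + k := by omega
        rwa [this] at ha
      refine ⟨dropFun π k (n + 1) a, ?_⟩
      simp only [hE, Finset.mem_filter, hD, Finset.mem_image]
      exact ⟨⟨a, ha', rfl⟩, hab⟩
    have hEmono : ∀ k, E (k + 1) ⊆ E k :=
      fun k => Finset.filter_subset_filter _ (hDmono (n + 1) k)
    obtain ⟨b', hb'⟩ := aux_finset_chain E hEmono hEne
    refine ⟨b', fun k => (Finset.mem_filter.1 (hb' k)).1, (Finset.mem_filter.1 (hb' 0)).2⟩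
  obtain ⟨b0, hb0⟩ := aux_finset_chain (D 0) (hDmono 0) (hDne 0)
  let f : (n : ℕ) → {b : α // ∀ k, b ∈ D n k} := fun n =>
    Nat.rec ⟨b0, hb0⟩
      (fun n p => ⟨(key n p.1 p.2).choose, (key n p.1 p.2).choose_spec.1⟩) n
  have hfL : ∀ n, (f n).1 ∈ L n := fun n => hD0 n _ ((f n).2 0)
  refine ⟨fun n => (f n).1, hfL, fun n => ⟨hfL (n + 1), ?_⟩⟩
  exact (key n (f n).1 (f n).2).choose_spec.2

/-- A ccc preorder ℙ with a height function h satisfying (I) (decreasing sequences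
of bounded height have lower bounds) and (II) (finite "roof" sets R for conditions
of bounded height incompatible with a given finite P) has every Q_m = {p : h p ≤ m}
leaf-linked; hence ℙ is σ-leaf-linked. -/
theorem stmt_13 (hccc : Ccc P) (h : P → ℕ)
    (hht : ∀ p q : P, q ≤ p → h p ≤ h q)
    (hI : ∀ p : ℕ → P, (∀ n, p (n + 1) ≤ p n) → (∃ M, ∀ n, h (p n) ≤ M) →
      ∃ q : P, ∀ n, q ≤ p n)
    (hII : ∀ (m : ℕ) (P' : Finset P), P'.Nonempty →
      ∃ R : Finset P,
        (∀ r ∈ R, ∀ p ∈ P', ¬ Compat r p) ∧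
        (∀ p : P, h p ≤ m → (∀ p' ∈ P', ¬ Compat p p') → ∃ r ∈ R, p ≤ r)) :
    (∀ m : ℕ, LeafLinked {p : P | h p ≤ m}) ∧
    (∃ Qs : ℕ → Set P, (∀ n, LeafLinked (Qs n)) ∧ (⋃ n, Qs n) = Set.univ) := by
  classical
  have main : ∀ m : ℕ, LeafLinked {p : P | h p ≤ m} := by
    intro m p hp
    by_contra hcon
    push_neg at hcon
    choose qq hqQ hqinc using hcon
    simp only [Set.mem_setOf_eq] at hqQ
    -- the finite sets {p 0, ..., p n}
    set P' : ℕ → Finset P := fun n => (Finset.range (n + 1)).image p with hP'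
    have hP'ne : ∀ n, (P' n).Nonempty :=
      fun n => ⟨p 0, Finset.mem_image.2 ⟨0, Finset.mem_range.2 (Nat.succ_pos n), rfl⟩⟩
    choose R hRinc hRcov using fun n => hII m (P' n) (hP'ne n)
    set L : ℕ → Finset P := fun n => (R n).filter (fun r => h r ≤ m) with hL
    have hpP' : ∀ n j, j ≤ n → p j ∈ P' n :=
      fun n j hj => Finset.mem_image.2 ⟨j, Finset.mem_range.2 (by omega), rfl⟩
    have hLinc : ∀ n r, r ∈ L n → ∀ j ≤ n, ¬ Compat r (p j) := by
      intro n r hr j hj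
      exact hRinc n r (Finset.mem_filter.1 hr).1 (p j) (hpP' n j hj)
    have hLcov : ∀ n (q : P), h q ≤ m → (∀ j ≤ n, ¬ Compat q (p j)) →
        ∃ r ∈ L n, q ≤ r := by
      intro n q hqm hqi
      obtain ⟨r, hrR, hqr⟩ := hRcov n q hqm (by
        intro p' hp'
        obtain ⟨j, hj, rfl⟩ := Finset.mem_image.1 hp'
        exact hqi j (Nat.lt_succ_iff.1 (Finset.mem_range.1 hj)))
      exact ⟨r, Finset.mem_filter.2 ⟨hrR, le_trans (hht r q hqr) hqm⟩, hqr⟩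
    have hLne : ∀ n, (L n).Nonempty := by
      intro n
      obtain ⟨r, hr, _⟩ := hLcov n (qq (n + 1)) (hqQ (n + 1))
        (fun j hj => hqinc (n + 1) j (by omega))
      exact ⟨r, hr⟩
    -- parent maps
    have hparent : ∀ n (r : P), r ∈ L (n + 1) → ∃ r' ∈ L n, r ≤ r' := by
      intro n r hr
      exact hLcov n r (Finset.mem_filter.1 hr).2
        (fun j hj => hLinc (n + 1) r hr j (by omega))
    set π : ℕ → P → P := fun n r =>
      if hr : r ∈ L (n + 1) then (hparent n r hr).choose else r with hπdef
    have hπ : ∀ n r, r ∈ L (n + 1) → π n r ∈ L n ∧ r ≤ π n r := by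
      intro n r hr
      simp only [hπdef, dif_pos hr]
      obtain ⟨h1, h2⟩ := (hparent n r hr).choose_spec
      exact ⟨h1, h2⟩
    obtain ⟨f, hfL, hfstep⟩ := koenig L hLne π (fun n a ha => (hπ n a ha).1)
    have hfdec : ∀ n, f (n + 1) ≤ f n := by
      intro n
      have := (hπ n (f (n + 1)) (hfstep n).1).2
      rwa [(hfstep n).2] at this
    have hfht : ∃ M, ∀ n, h (f n) ≤ M :=
      ⟨m, fun n => (Finset.mem_filter.1 (hfL n)).2⟩
    obtain ⟨q, hq⟩ := hI f hfdec hfht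
    have hqinc' : ∀ j, ¬ Compat q (p j) := by
      intro j ⟨r, hrq, hrp⟩
      exact hLinc j (f j) (hfL j) j le_rfl ⟨r, le_trans hrq (hq j), hrp⟩
    obtain ⟨a, ⟨j, rfl⟩, hqa⟩ := hp.2 q
    exact hqinc' j hqa
  exact ⟨main, fun n => {p : P | h p ≤ n}, main, by
    ext x
    simp only [Set.mem_iUnion, Set.mem_setOf_eq, Set.mem_univ, iff_true]
    exact ⟨h x, le_rfl⟩⟩
end

section
/- In the localization forcing LOC_{b,h} (conditions (p,n) with p ∈ ∏_k [b(k)]^{≤h(k)} of uniformly bounded width, ordered by end-extension below n and coordinatewise inclusion), for every s ∈ ∏_{k<|s|}[b(k)]^{≤h(k)}, every m < ω, every nonprincipal ultrafilter D on ω, and every sequence ⟨(p_i, |s|) : i < ω⟩ in L(s,m) = {(p,|s|) : s ⊆ p, ∀k |p(k)| ≤ m}, there is a condition (q,|s|) ∈ L(s,m) such that: for every (r,n*) ≤ (q,|s|) and every a ∈ D, there exist i ∈ a and a common extension of (r,n*) and (p_i,|s|). (Assume h diverges to infinity and b(k) ≥ 1 for all k.) -/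
open Filter

/-- A condition of the localization forcing LOC_{b,h} (with trivially-true stem
bookkeeping): a slalom p with p k ⊆ b k, |p k| ≤ h k, of uniformly bounded width. -/
def IsLocCond (b h : ℕ → ℕ) (p : ℕ → Finset ℕ) : Prop :=
  (∀ k, p k ⊆ Finset.range (b k) ∧ (p k).card ≤ h k) ∧ ∃ M, ∀ k, (p k).card ≤ M

/-- The order of LOC_{b,h}: (p', n') ≤ (p, n) iff n ≤ n', p' and p agree below n,
and p k ⊆ p' k everywhere. -/
def LocLE (p' : ℕ → Finset ℕ) (n' : ℕ) (p : ℕ → Finset ℕ) (n : ℕ) : Prop :=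
  n ≤ n' ∧ (∀ k < n, p' k = p k) ∧ ∀ k, p k ⊆ p' k

/-- The combinatorial core of ultrafilter-linkedness of L(s,m) in LOC_{b,h}:
given a stem s of length ns, a width bound m, a nonprincipal ultrafilter D, and a
sequence ⟨(p i, ns)⟩ in L(s,m), there is (q, ns) ∈ L(s,m) such that every
(r, nr) ≤ (q, ns) is, for every a ∈ D, compatible with (p i, ns) for some i ∈ a. -/
theorem stmt_16 (b h : ℕ → ℕ) (hb : ∀ k, 1 ≤ b k)
    (hh : Tendsto h atTop atTop)
    (ns m : ℕ) (s : ℕ → Finset ℕ)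
    (hs : ∀ k < ns, s k ⊆ Finset.range (b k) ∧ (s k).card ≤ h k ∧ (s k).card ≤ m)
    (D : Ultrafilter ℕ) (hD : ∀ a : Set ℕ, a.Finite → a ∉ D)
    (p : ℕ → ℕ → Finset ℕ)
    (hp : ∀ i, IsLocCond b h (p i) ∧ (∀ k < ns, p i k = s k) ∧ ∀ k, (p i k).card ≤ m) :
    ∃ q : ℕ → Finset ℕ, IsLocCond b h q ∧ (∀ k < ns, q k = s k) ∧ (∀ k, (q k).card ≤ m) ∧
      ∀ (r : ℕ → Finset ℕ) (nr : ℕ), IsLocCond b h r → LocLE r nr q ns →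
        ∀ a : Set ℕ, a ∈ D →
          ∃ i ∈ a, ∃ (t : ℕ → Finset ℕ) (nt : ℕ), IsLocCond b h t ∧
            LocLE t nt r nr ∧ LocLE t nt (p i) ns := by
  classical
  set q : ℕ → Finset ℕ :=
    fun k => (Finset.range (b k)).filter (fun j => {i | j ∈ p i k} ∈ D) with hq
  have key : ∀ k, ∃ i, q k ⊆ p i k := by
    intro k
    have hS : (⋂ j ∈ q k, {i | j ∈ p i k}) ∈ D := by
      refine (Filter.biInter_finset_mem _).mpr ?_
      intro j hj
      simp only [hq, Finset.mem_filter] at hj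
      exact hj.2
    obtain ⟨i, hi⟩ := Filter.nonempty_of_mem hS
    exact ⟨i, fun j hj => Set.mem_iInter₂.mp hi j hj⟩
  have hqh : ∀ k, (q k).card ≤ h k := by
    intro k
    obtain ⟨i, hi⟩ := key k
    exact (Finset.card_le_card hi).trans ((hp i).1.1 k).2
  have hqm : ∀ k, (q k).card ≤ m := by
    intro k
    obtain ⟨i, hi⟩ := key k
    exact (Finset.card_le_card hi).trans ((hp i).2.2 k)
  have hqs : ∀ k < ns, q k = s k := by
    intro k hk
    ext j
    simp only [hq, Finset.mem_filter, Finset.mem_range]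
    constructor
    · rintro ⟨-, hmem⟩
      obtain ⟨i, hi⟩ := Filter.nonempty_of_mem hmem
      have hik : j ∈ p i k := hi
      rwa [(hp i).2.1 k hk] at hik
    · intro hj
      refine ⟨Finset.mem_range.mp ((hs k hk).1 hj), ?_⟩
      have : {i | j ∈ p i k} = Set.univ := by
        ext i; simp [(hp i).2.1 k hk, hj]
      rw [this]; exact Filter.univ_mem
  refine ⟨q, ⟨fun k => ⟨by simp only [hq]; exact Finset.filter_subset _ _, hqh k⟩,
    ⟨m, hqm⟩⟩, hqs, hqm, ?_⟩
  intro r nr hr hrq a ha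
  obtain ⟨M, hM⟩ := hr.2
  obtain ⟨N, hN⟩ := Filter.eventually_atTop.mp (Filter.tendsto_atTop.mp hh (M + m))
  set K := max N nr with hK
  have hB : (a ∩ ⋂ k ∈ Finset.range K, ⋂ j ∈ Finset.range (b k) \ q k,
      {i | j ∉ p i k}) ∈ D := by
    refine Filter.inter_mem ha ?_
    rw [Filter.biInter_finset_mem]
    intro k hk
    rw [Filter.biInter_finset_mem]
    intro j hj
    have hjq : j ∉ q k := (Finset.mem_sdiff.mp hj).2
    have hnot : {i | j ∈ p i k} ∉ D := by
      intro hmem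
      exact hjq (by
        simp only [hq, Finset.mem_filter]
        exact ⟨(Finset.mem_sdiff.mp hj).1, hmem⟩)
    have hc := (Ultrafilter.compl_mem_iff_notMem).mpr hnot
    simpa [Set.compl_setOf] using hc
  obtain ⟨i, hi⟩ := Filter.nonempty_of_mem hB
  have hsub : ∀ k < K, p i k ⊆ q k := by
    intro k hk j hj
    by_contra hjq
    have hjr : j ∈ Finset.range (b k) := ((hp i).1.1 k).1 hj
    have : i ∈ {i | j ∉ p i k} :=
      Set.mem_iInter₂.mp (Set.mem_iInter₂.mp hi.2 k (Finset.mem_range.mpr hk)) j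
        (Finset.mem_sdiff.mpr ⟨hjr, hjq⟩)
    exact this hj
  have hsubr : ∀ k < K, p i k ⊆ r k := fun k hk => (hsub k hk).trans (hrq.2.2 k)
  refine ⟨i, hi.1, fun k => r k ∪ p i k, max nr ns, ?_, ?_, ?_⟩
  · refine ⟨fun k => ⟨Finset.union_subset (hr.1 k).1 ((hp i).1.1 k).1, ?_⟩,
      ⟨M + m, fun k => (Finset.card_union_le _ _).trans
        (Nat.add_le_add (hM k) ((hp i).2.2 k))⟩⟩
    show (r k ∪ p i k).card ≤ h k
    rcases lt_or_ge k K with hk | hk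
    · rw [Finset.union_eq_left.mpr (hsubr k hk)]
      exact (hr.1 k).2
    · exact (Finset.card_union_le _ _).trans
        ((Nat.add_le_add (hM k) ((hp i).2.2 k)).trans
          (hN k (le_trans (le_max_left _ _) hk)))
  · exact ⟨le_max_left _ _,
      fun k hk => Finset.union_eq_left.mpr
        (hsubr k (lt_of_lt_of_le hk (le_max_right _ _))),
      fun k => Finset.subset_union_left⟩
  · refine ⟨le_max_right _ _, fun k hk => ?_, fun k => Finset.subset_union_right⟩
    show r k ∪ p i k = p i k
    rw [hrq.2.1 k hk, hqs k hk, (hp i).2.1 k hk, Finset.union_self]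
end
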